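/- Suppose that for every j = 1,…,p one has |d + k| < √2·(λ_j + k), that d ≠ −k, and that d ≠ λ_j for all j. Then the matrix S₂ = Cov_LTE − Cov_MAULTE is positive definite. -/

import Mathlib

open Matrix

/-- Covariance matrix of the Liu-type estimator (LTE). -/
noncomputable def covLTE {p : ℕ} (V : Matrix (Fin p) (Fin p) ℝ) (k d : ℝ) :
    Matrix (Fin p) (Fin p) ℝ :=
  (V + k • 1)⁻¹ * (V - d • 1) * V⁻¹ * (V - d • 1) * (V + k • 1)⁻¹

/-- Covariance matrix of the almost unbiased Liu-type estimator (AULTE). -/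
noncomputable def covAULTE {p : ℕ} (V : Matrix (Fin p) (Fin p) ℝ) (k d : ℝ) :
    Matrix (Fin p) (Fin p) ℝ :=
  (1 - (k + d) ^ 2 • ((V + k • 1)⁻¹) ^ 2) * V⁻¹ * (1 - (k + d) ^ 2 • ((V + k • 1)⁻¹) ^ 2)

/-- The matrix `M` entering the modified almost unbiased Liu-type estimator (MAULTE). -/
noncomputable def mMAULTE {p : ℕ} (V : Matrix (Fin p) (Fin p) ℝ) (k d : ℝ) :
    Matrix (Fin p) (Fin p) ℝ :=
  (1 - (k + d) ^ 2 • ((V + k • 1)⁻¹) ^ 2) * (1 - (k + d) • (V + k • 1)⁻¹)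

/-- Covariance matrix of the MAULTE. -/
noncomputable def covMAULTE {p : ℕ} (V : Matrix (Fin p) (Fin p) ℝ) (k d : ℝ) :
    Matrix (Fin p) (Fin p) ℝ :=
  mMAULTE V k d * V⁻¹ * (mMAULTE V k d)ᵀ

/-- Bias vector of the LTE. -/
noncomputable def biasLTE {p : ℕ} (V : Matrix (Fin p) (Fin p) ℝ) (k d : ℝ) (β : Fin p → ℝ) :
    Fin p → ℝ :=
  (-(d + k)) • ((V + k • 1)⁻¹ *ᵥ β)

/-- Bias vector of the AULTE. -/
noncomputable def biasAULTE {p : ℕ} (V : Matrix (Fin p) (Fin p) ℝ) (k d : ℝ) (β : Fin p → ℝ) :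
    Fin p → ℝ :=
  (-(d + k) ^ 2) • (((V + k • 1)⁻¹) ^ 2 *ᵥ β)

/-- Bias vector of the MAULTE. -/
noncomputable def biasMAULTE {p : ℕ} (V : Matrix (Fin p) (Fin p) ℝ) (k d : ℝ) (β : Fin p → ℝ) :
    Fin p → ℝ :=
  (-(d + k)) •
    (((1 + (d + k) • (V + k • 1)⁻¹ - (d + k) ^ 2 • ((V + k • 1)⁻¹) ^ 2) * (V + k • 1)⁻¹) *ᵥ β)

/-- Matrix mean squared error built from a covariance matrix and a bias vector. -/
noncomputable def mmse {p : ℕ} (C : Matrix (Fin p) (Fin p) ℝ) (b : Fin p → ℝ) :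
    Matrix (Fin p) (Fin p) ℝ :=
  C + vecMulVec b b

/-! Conjugation `X ↦ Q X Qᵀ` by the orthogonal matrix `Q` is a star-algebra automorphism of the
real matrices. It therefore commutes with inverses and transposes, hence with `covLTE` and
`covMAULTE`, and it preserves positive definiteness; this reduces the claim to `V = Λ`. There
`Cov_LTE - Cov_MAULTE` is diagonal with entries
`(λ - d)² (d + k)² (2 (λ + k)² - (d + k)²) / (λ (λ + k)⁶)`,
and the hypotheses make each factor of the numerator positive. -/

theorem map_ringInverse {M₀ N₀ F : Type*} [MonoidWithZero M₀] [MonoidWithZero N₀]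
    [EquivLike F M₀ N₀] [MulEquivClass F M₀ N₀] (f : F) (a : M₀) :
    f (Ring.inverse a) = Ring.inverse (f a) := by
  by_cases ha : IsUnit a
  · obtain ⟨u, rfl⟩ := ha
    simpa [Ring.inverse_unit] using (Ring.inverse_unit (Units.map (f : M₀ →* N₀) u)).symm
  · rw [Ring.inverse_non_unit a ha, map_zero, Ring.inverse_non_unit]
    rwa [isUnit_map_iff]

namespace Matrix

theorem map_transpose {n R F : Type*} [Star R] [TrivialStar R]
    [FunLike F (Matrix n n R) (Matrix n n R)] [StarHomClass F (Matrix n n R) (Matrix n n R)]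
    (f : F) (A : Matrix n n R) : f Aᵀ = (f A)ᵀ := by
  simp only [← conjTranspose_eq_transpose_of_trivial, ← star_eq_conjTranspose, map_star]

variable {n R F : Type*} [Fintype n] [DecidableEq n] [CommRing R]

theorem map_nonsing_inv [EquivLike F (Matrix n n R) (Matrix n n R)]
    [MulEquivClass F (Matrix n n R) (Matrix n n R)] (f : F) (A : Matrix n n R) :
    f A⁻¹ = (f A)⁻¹ := by
  simp only [nonsing_inv_eq_ringInverse, map_ringInverse]

theorem inv_diagonal_of_ne_zero {K : Type*} [Field K] {v : n → K} (hv : ∀ i, v i ≠ 0) :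
    (diagonal v)⁻¹ = diagonal v⁻¹ := by
  refine inv_eq_left_inv ?_
  rw [diagonal_mul_diagonal, ← diagonal_one]
  exact congrArg diagonal (funext fun i => inv_mul_cancel₀ (hv i))

end Matrix

section

variable {p : ℕ} (k d : ℝ) {F : Type*}
  [EquivLike F (Matrix (Fin p) (Fin p) ℝ) (Matrix (Fin p) (Fin p) ℝ)]
  [AlgEquivClass F ℝ (Matrix (Fin p) (Fin p) ℝ) (Matrix (Fin p) (Fin p) ℝ)]

theorem covLTE_map (σ : F) (V : Matrix (Fin p) (Fin p) ℝ) :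
    covLTE (σ V) k d = σ (covLTE V k d) := by
  simp only [covLTE, map_mul, map_add, map_sub, map_smul, map_one, map_nonsing_inv]

theorem covMAULTE_map [StarHomClass F (Matrix (Fin p) (Fin p) ℝ) (Matrix (Fin p) (Fin p) ℝ)]
    (σ : F) (V : Matrix (Fin p) (Fin p) ℝ) :
    covMAULTE (σ V) k d = σ (covMAULTE V k d) := by
  simp only [covMAULTE, mMAULTE, map_transpose, map_mul, map_add, map_sub, map_smul, map_one,
    map_pow, map_nonsing_inv]

end

theorem covLTE_sub_covMAULTE_diagonal {p : ℕ} (k d : ℝ) {lam : Fin p → ℝ} (hlam : ∀ j, lam j ≠ 0)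
    (hlamk : ∀ j, lam j + k ≠ 0) :
    covLTE (diagonal lam) k d - covMAULTE (diagonal lam) k d = diagonal fun j =>
      (lam j - d) ^ 2 * (d + k) ^ 2 * (2 * (lam j + k) ^ 2 - (d + k) ^ 2) /
        (lam j * (lam j + k) ^ 6) := by
  simp only [covLTE, covMAULTE, mMAULTE, smul_one_eq_diagonal, diagonal_add, diagonal_sub]
  rw [inv_diagonal_of_ne_zero hlamk, inv_diagonal_of_ne_zero hlam]
  simp only [diagonal_pow, ← diagonal_smul, ← diagonal_one, diagonal_sub, diagonal_mul_diagonal,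
    diagonal_transpose]
  refine congrArg diagonal (funext fun j => ?_)
  -- with `a = λ + k`, `t = d + k`: `M = (λ - d)(a² - t²)/a³` and `a⁴ - (a² - t²)² = t²(2a² - t²)`
  have hl := hlam j
  have hlk := hlamk j
  simp only [Pi.inv_apply, Pi.pow_apply, Pi.smul_apply, smul_eq_mul]
  field_simp
  ring

/-- If `|d + k| < √2·(λ_j + k)` for all `j`, `d ≠ −k`, and `d ≠ λ_j` for all
`j`, then `S₂ = Cov_LTE − Cov_MAULTE` is positive definite. -/
theorem covLTE_sub_covMAULTE_posDef (p : ℕ) (Q : Matrix (Fin p) (Fin p) ℝ) (hQ : Q * Qᵀ = 1)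
    (lam : Fin p → ℝ) (hlam : ∀ j, 0 < lam j) (k d : ℝ) (hk : 0 < k)
    (h : ∀ j, |d + k| < Real.sqrt 2 * (lam j + k))
    (hdk : d ≠ -k) (hdl : ∀ j, d ≠ lam j) :
    (covLTE (Q * Matrix.diagonal lam * Qᵀ) k d -
      covMAULTE (Q * Matrix.diagonal lam * Qᵀ) k d).PosDef := by
  have hQstar : star Q = Qᵀ := by rw [star_eq_conjTranspose, conjTranspose_eq_transpose_of_trivial]
  have hQunitary : Q ∈ unitary (Matrix (Fin p) (Fin p) ℝ) := by
    rw [Unitary.mem_iff, hQstar, mul_eq_one_comm, and_self]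
    exact hQ
  have hV : Q * diagonal lam * Qᵀ = Unitary.conjStarAlgAut ℝ _ ⟨Q, hQunitary⟩ (diagonal lam) := by
    rw [Unitary.conjStarAlgAut_apply, hQstar]
  have hlamk : ∀ j, 0 < lam j + k := fun j => add_pos (hlam j) hk
  rw [hV, covLTE_map, covMAULTE_map, ← map_sub, Unitary.conjStarAlgAut_apply,
    IsUnit.posDef_star_right_conjugate_iff Unitary.isUnit_coe,
    covLTE_sub_covMAULTE_diagonal k d (fun j => (hlam j).ne') (fun j => (hlamk j).ne'),
    posDef_diagonal_iff]
  intro j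
  have hgap : 0 < 2 * (lam j + k) ^ 2 - (d + k) ^ 2 := by
    have := pow_lt_pow_left₀ (h j) (abs_nonneg _) two_ne_zero
    rw [sq_abs, mul_pow, Real.sq_sqrt zero_le_two] at this
    exact sub_pos.mpr this
  have hdl' : lam j - d ≠ 0 := sub_ne_zero.mpr (hdl j).symm
  have hdk' : d + k ≠ 0 := fun h0 => hdk (eq_neg_of_add_eq_zero_left h0)
  have hl := hlam j
  have hlk := hlamk j
  positivity
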